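/- Let L be a bounded lattice, Y = D̄♭(L) = (SPH(L,2_B), E), φ ∈ MPE(Y,2) and f,g ∈ SPH(L,2_B). Then: (i) if f ≤₂ g and φ(f) = 0, then φ(g) = 0; (ii) if f ≤₁ g and φ(f) = 1, then φ(g) = 1. Further, for every a ∈ L: (iii) if φ⁻¹(0) ∩ W_a = ∅ then φ⁻¹(0) ⊆ V_a; (iv) if φ⁻¹(1) ∩ V_a = ∅ then φ⁻¹(1) ⊆ W_a. -/

import Mathlib

namespace CanExt

open Classical

/-- A partial map from `X` into the two-element chain `{0,1}` (encoded as `Bool`,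
with `false` playing the role of `0` and `true` the role of `1`);
`φ x = none` means `x` is outside the domain of `φ`. -/
abbrev PMap (X : Type*) := X → Option Bool

/-- The preimage of `1` of a partial map. -/
def pre1 {X : Type*} (φ : PMap X) : Set X := {x | φ x = some true}

/-- The preimage of `0` of a partial map. -/
def pre0 {X : Type*} (φ : PMap X) : Set X := {x | φ x = some false}

/-- A partial map is `E`-preserving if whenever `x, y` lie in its domain and
`(x,y) ∈ E`, then `φ x ≤ φ y`. -/
def EPres {X : Type*} (E : X → X → Prop) (φ : PMap X) : Prop :=
  ∀ ⦃x y : X⦄, E x y → ∀ ⦃a b : Bool⦄, φ x = some a → φ y = some b → a ≤ b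

/-- `PExt ψ φ` : the partial map `ψ` extends the partial map `φ`. -/
def PExt {X : Type*} (ψ φ : PMap X) : Prop :=
  ∀ ⦃x : X⦄ ⦃a : Bool⦄, φ x = some a → ψ x = some a

/-- The set of maximal partial `E`-preserving maps from `(X,E)` into the
two-element chain `2`. -/
def MPE {X : Type*} (E : X → X → Prop) : Set (PMap X) :=
  {φ | EPres E φ ∧ ∀ ψ : PMap X, EPres E ψ → PExt ψ φ → ψ = φ}

/-- A partial morphism from a graph with topology `(X,E,t)` to `2_τ`:
the preimages of `1` and `0` are `t`-closed (equivalently, the domain is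
closed and the restriction to the domain is continuous into discrete `2`),
and the map is `E`-preserving. -/
def PMorphT {X : Type*} (E : X → X → Prop) (t : TopologicalSpace X) (φ : PMap X) : Prop :=
  EPres E φ ∧ @IsClosed X t (pre1 φ) ∧ @IsClosed X t (pre0 φ)

/-- The set of maximal partial morphisms from `(X,E,t)` to `2_τ`. -/
def MPM {X : Type*} (E : X → X → Prop) (t : TopologicalSpace X) : Set (PMap X) :=
  {φ | PMorphT E t φ ∧ ∀ ψ : PMap X, PMorphT E t ψ → PExt ψ φ → ψ = φ}

/-- The relation `E` between partial maps on a lattice `L`: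
`(f,g) ∈ E` iff `f x ≤ g x` for all `x ∈ dom f ∩ dom g`. -/
def ErelP {L : Type*} (f g : PMap L) : Prop :=
  ∀ ⦃x : L⦄ ⦃a b : Bool⦄, f x = some a → g x = some b → a ≤ b

/-- `f ≤₁ g` iff `f⁻¹(1) ⊆ g⁻¹(1)`. -/
def le1 {L : Type*} (f g : PMap L) : Prop := pre1 f ⊆ pre1 g

/-- `f ≤₂ g` iff `f⁻¹(0) ⊆ g⁻¹(0)`. -/
def le2 {L : Type*} (f g : PMap L) : Prop := pre0 f ⊆ pre0 g

section Lat

variable (L : Type*) [Lattice L] [BoundedOrder L]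

/-- A partial homomorphism from a bounded lattice `L` to the two-element
bounded lattice `2_B`: its domain is a `{0,1}`-sublattice of `L` and the
restriction to the domain is a bounded-lattice homomorphism. -/
def PHom (f : PMap L) : Prop :=
  f ⊥ = some false ∧ f ⊤ = some true ∧
  ∀ ⦃a b : L⦄ ⦃x y : Bool⦄, f a = some x → f b = some y →
    f (a ⊓ b) = some (x ⊓ y) ∧ f (a ⊔ b) = some (x ⊔ y)

/-- The set of maximal partial homomorphisms (MPHs) from `L` to `2_B`. -/
def MPHset : Set (PMap L) := {f | PHom L f ∧ ∀ g : PMap L, PHom L g → PExt g f → g = f}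

/-- The underlying set of the graph `D♭(L)`. -/
abbrev MPHsub := {f : PMap L // f ∈ MPHset L}

/-- The relation `E` on `MPH(L, 2_B)`, giving the graph `D♭(L)`. -/
def EM (f g : MPHsub L) : Prop := ErelP f.1 g.1

/-- The evaluation map `e_a` on `MPH(L,2_B)` : `e_a(f) = f(a)` if `a ∈ dom f`. -/
def evalM (a : L) : PMap (MPHsub L) := fun f => f.1 a

/-- `V_a = {f ∈ MPH(L,2_B) : f(a) = 0}`. -/
def VaM (a : L) : Set (MPHsub L) := {f | f.1 a = some false}

/-- `W_a = {f ∈ MPH(L,2_B) : f(a) = 1}`. -/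
def WaM (a : L) : Set (MPHsub L) := {f | f.1 a = some true}

/-- The topology on `MPH(L,2_B)` with the sets `V_a`, `W_a` as a subbasis of
closed sets. -/
def tauM : TopologicalSpace (MPHsub L) :=
  TopologicalSpace.generateFrom {U | ∃ a : L, U = (VaM L a)ᶜ ∨ U = (WaM L a)ᶜ}

/-- A (nonempty) lattice filter. -/
def IsLatFilter (F : Set L) : Prop :=
  F.Nonempty ∧ (∀ ⦃a b : L⦄, a ∈ F → a ≤ b → b ∈ F) ∧
    (∀ ⦃a b : L⦄, a ∈ F → b ∈ F → a ⊓ b ∈ F)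

/-- A (nonempty) lattice ideal. -/
def IsLatIdeal (I : Set L) : Prop :=
  I.Nonempty ∧ (∀ ⦃a b : L⦄, a ∈ I → b ≤ a → b ∈ I) ∧
    (∀ ⦃a b : L⦄, a ∈ I → b ∈ I → a ⊔ b ∈ I)

/-- The set of special partial homomorphisms (SPHs) from `L` to `2_B`:
`f⁻¹(1)` is a nonempty filter, `f⁻¹(0)` is a nonempty ideal, and they are
disjoint. -/
def SPHset : Set (PMap L) :=
  {f | IsLatFilter L (pre1 f) ∧ IsLatIdeal L (pre0 f) ∧ Disjoint (pre1 f) (pre0 f)}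

/-- The underlying set of the graph `D̄♭(L)`. -/
abbrev SPHsub := {f : PMap L // f ∈ SPHset L}

/-- The relation `E` on `SPH(L, 2_B)`, giving the graph `D̄♭(L)`. -/
def ES (f g : SPHsub L) : Prop := ErelP f.1 g.1

/-- The evaluation map `ē_a` on `SPH(L,2_B)`. -/
def evalS (a : L) : PMap (SPHsub L) := fun f => f.1 a

/-- `V_a = {f ∈ SPH(L,2_B) : f(a) = 0}`. -/
def VaS (a : L) : Set (SPHsub L) := {f | f.1 a = some false}

/-- `W_a = {f ∈ SPH(L,2_B) : f(a) = 1}`. -/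
def WaS (a : L) : Set (SPHsub L) := {f | f.1 a = some true}

/-- The topology on `SPH(L,2_B)` with the sets `V_a`, `W_a` as a subbasis of
closed sets. -/
def tauS : TopologicalSpace (SPHsub L) :=
  TopologicalSpace.generateFrom {U | ∃ a : L, U = (VaS L a)ᶜ ∨ U = (WaS L a)ᶜ}

/-- The carrier of the completion built from `D♭(L)`. -/
abbrev CX := {φ : PMap (MPHsub L) // φ ∈ MPE (EM L)}

/-- The carrier of the completion built from `D̄♭(L)`. -/
abbrev CY := {φ : PMap (SPHsub L) // φ ∈ MPE (ES L)}

end Lat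

/-!
A maximal partial `E`-preserving map `φ` takes the value `0` at `g` as soon as nothing `E`-below
`g` is sent to `1`, since otherwise redefining `φ g := 0` would be a proper `E`-preserving
extension; dually for `1`. If `f ≤₂ g`, everything `E`-below `g` is `E`-below `f`, which gives (i),
and (ii) is dual. For (iii), if `φ f = 0` but `f a ≠ 0`, then the principal filter `↑a` and the
ideal `f⁻¹(0)` are disjoint and define an SPH `g ∈ W_a` with `f ≤₂ g`, so `φ g = 0` by (i);
(iv) is dual.
-/

section Graph

variable {X : Type*} {E : X → X → Prop}

theorem eq_some_of_mem_MPE (hE : ∀ x, E x x) {φ : PMap X} (hφ : φ ∈ MPE E) {g : X} {c : Bool}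
    (hc : ∀ ⦃x : X⦄ ⦃b : Bool⦄, φ x = some b → (E x g → b ≤ c) ∧ (E g x → c ≤ b)) :
    φ g = some c := by
  have hpres : EPres E (Function.update φ g (some c)) := by
    intro x y hxy a b hx hy
    rcases eq_or_ne x g with rfl | hxg
    · rw [Function.update_self, Option.some_inj] at hx
      rcases eq_or_ne y x with rfl | hyx
      · rw [Function.update_self, Option.some_inj] at hy
        exact hx ▸ hy ▸ le_rfl
      · rw [Function.update_of_ne hyx] at hy
        exact hx ▸ (hc hy).2 hxy
    · rw [Function.update_of_ne hxg] at hx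
      rcases eq_or_ne y g with rfl | hyg
      · rw [Function.update_self, Option.some_inj] at hy
        exact hy ▸ (hc hx).1 hxy
      · rw [Function.update_of_ne hyg] at hy
        exact hφ.1 hxy hx hy
  have hext : PExt (Function.update φ g (some c)) φ := by
    intro x a hx
    rcases eq_or_ne x g with rfl | hxg
    · have hac : a = c := le_antisymm ((hc hx).1 (hE x)) ((hc hx).2 (hE x))
      rw [Function.update_self, hac]
    · rwa [Function.update_of_ne hxg]
  rw [← hφ.2 _ hpres hext, Function.update_self]

end Graph

theorem erelP_refl {L : Type*} (f : PMap L) : ErelP f f := by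
  intro x a b ha hb
  rw [ha, Option.some_inj] at hb
  exact hb ▸ le_rfl

theorem ErelP.of_le2_right {L : Type*} {f g h : PMap L} (hhg : ErelP h g) (hfg : le2 f g) :
    ErelP h f := by
  intro x a b hx hfx
  cases b
  · exact hhg hx (hfg hfx)
  · exact Bool.le_true a

theorem ErelP.of_le1_left {L : Type*} {f g h : PMap L} (hgh : ErelP g h) (hfg : le1 f g) :
    ErelP f h := by
  intro x a b hfx hx
  cases a
  · exact Bool.false_le b
  · exact hgh (hfg hfx) hx

noncomputable def ofFilterIdeal {L : Type*} (F I : Set L) : PMap L := fun z =>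
  if z ∈ F then some true else if z ∈ I then some false else none

theorem pre1_ofFilterIdeal {L : Type*} (F I : Set L) : pre1 (ofFilterIdeal F I) = F := by
  ext z
  by_cases hF : z ∈ F <;> simp [pre1, ofFilterIdeal, hF]

theorem pre0_ofFilterIdeal {L : Type*} {F I : Set L} (h : Disjoint F I) :
    pre0 (ofFilterIdeal F I) = I := by
  ext z
  by_cases hF : z ∈ F
  · simp [pre0, ofFilterIdeal, hF, Set.disjoint_left.1 h hF]
  · by_cases hI : z ∈ I <;> simp [pre0, ofFilterIdeal, hF, hI]

section Lattice

variable {L : Type*} [Lattice L]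

theorem isLatFilter_Ici (a : L) : IsLatFilter L (Set.Ici a) :=
  ⟨⟨a, le_rfl⟩, fun _ _ hx hxy => le_trans hx hxy, fun _ _ hx hy => le_inf hx hy⟩

theorem isLatIdeal_Iic (a : L) : IsLatIdeal L (Set.Iic a) :=
  ⟨⟨a, le_rfl⟩, fun _ _ hx hyx => le_trans hyx hx, fun _ _ hx hy => sup_le hx hy⟩

theorem IsLatIdeal.disjoint_Ici {I : Set L} (hI : IsLatIdeal L I) {a : L} (ha : a ∉ I) :
    Disjoint (Set.Ici a) I :=
  Set.disjoint_left.2 fun _ hx hxI => ha (hI.2.1 hxI hx)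

theorem IsLatFilter.disjoint_Iic {F : Set L} (hF : IsLatFilter L F) {a : L} (ha : a ∉ F) :
    Disjoint F (Set.Iic a) :=
  Set.disjoint_left.2 fun _ hxF hx => ha (hF.2.1 hxF hx)

theorem ofFilterIdeal_mem_SPHset {F I : Set L} (hF : IsLatFilter L F) (hI : IsLatIdeal L I)
    (h : Disjoint F I) : ofFilterIdeal F I ∈ SPHset L := by
  rw [SPHset, Set.mem_ofPred_eq, pre1_ofFilterIdeal, pre0_ofFilterIdeal h]
  exact ⟨hF, hI, h⟩

variable {φ : PMap (SPHsub L)}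

theorem apply_eq_false_of_le2 (hφ : φ ∈ MPE (ES L)) {f g : SPHsub L} (hfg : le2 f.1 g.1)
    (hf : φ f = some false) : φ g = some false :=
  eq_some_of_mem_MPE (fun g => erelP_refl g.1) hφ fun x b hx =>
    ⟨fun hxg => hφ.1 (ErelP.of_le2_right (h := x.1) hxg hfg) hx hf, fun _ => Bool.false_le b⟩

theorem apply_eq_true_of_le1 (hφ : φ ∈ MPE (ES L)) {f g : SPHsub L} (hfg : le1 f.1 g.1)
    (hf : φ f = some true) : φ g = some true :=
  eq_some_of_mem_MPE (fun g => erelP_refl g.1) hφ fun x b hx =>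
    ⟨fun _ => Bool.le_true b, fun hgx => hφ.1 (ErelP.of_le1_left (h := x.1) hgx hfg) hf hx⟩

theorem pre0_subset_VaS (hφ : φ ∈ MPE (ES L)) {a : L} (ha : pre0 φ ∩ WaS L a = ∅) :
    pre0 φ ⊆ VaS L a := by
  intro f hf
  by_contra hfa
  have hdisj := f.2.2.1.disjoint_Ici hfa
  let g : SPHsub L := ⟨ofFilterIdeal (Set.Ici a) (pre0 f.1),
    ofFilterIdeal_mem_SPHset (isLatFilter_Ici a) f.2.2.1 hdisj⟩
  have hg0 : φ g = some false := apply_eq_false_of_le2 hφ (pre0_ofFilterIdeal hdisj).ge hf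
  have hgW : g ∈ WaS L a := (pre1_ofFilterIdeal _ _).ge Set.self_mem_Ici
  exact (Set.eq_empty_iff_forall_notMem.1 ha) g ⟨hg0, hgW⟩

theorem pre1_subset_WaS (hφ : φ ∈ MPE (ES L)) {a : L} (ha : pre1 φ ∩ VaS L a = ∅) :
    pre1 φ ⊆ WaS L a := by
  intro f hf
  by_contra hfa
  have hdisj := f.2.1.disjoint_Iic hfa
  let g : SPHsub L := ⟨ofFilterIdeal (pre1 f.1) (Set.Iic a),
    ofFilterIdeal_mem_SPHset f.2.1 (isLatIdeal_Iic a) hdisj⟩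
  have hg1 : φ g = some true := apply_eq_true_of_le1 hφ (pre1_ofFilterIdeal _ _).ge hf
  have hgV : g ∈ VaS L a := (pre0_ofFilterIdeal hdisj).ge Set.self_mem_Iic
  exact (Set.eq_empty_iff_forall_notMem.1 ha) g ⟨hg1, hgV⟩

end Lattice

theorem stmt_13_general (L : Type*) [Lattice L]
    (φ : PMap (SPHsub L)) (hφ : φ ∈ MPE (ES L)) :
    (∀ f g : SPHsub L, le2 f.1 g.1 → φ f = some false → φ g = some false) ∧
    (∀ f g : SPHsub L, le1 f.1 g.1 → φ f = some true → φ g = some true) ∧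
    (∀ a : L, pre0 φ ∩ WaS L a = ∅ → pre0 φ ⊆ VaS L a) ∧
    (∀ a : L, pre1 φ ∩ VaS L a = ∅ → pre1 φ ⊆ WaS L a) :=
  ⟨fun _ _ => apply_eq_false_of_le2 hφ, fun _ _ => apply_eq_true_of_le1 hφ,
    fun _ => pre0_subset_VaS hφ, fun _ => pre1_subset_WaS hφ⟩

/-- Let `L` be a bounded lattice, `Y = D̄♭(L)` and
`φ ∈ MPE(Y,2)`. Then: (i) `f ≤₂ g` and `φ(f) = 0` imply `φ(g) = 0`;
(ii) `f ≤₁ g` and `φ(f) = 1` imply `φ(g) = 1`; and for every `a ∈ L`: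
(iii) `φ⁻¹(0) ∩ W_a = ∅` implies `φ⁻¹(0) ⊆ V_a`;
(iv) `φ⁻¹(1) ∩ V_a = ∅` implies `φ⁻¹(1) ⊆ W_a`. -/
theorem stmt_13 (L : Type*) [Lattice L] [BoundedOrder L]
    (φ : PMap (SPHsub L)) (hφ : φ ∈ MPE (ES L)) :
    (∀ f g : SPHsub L, le2 f.1 g.1 → φ f = some false → φ g = some false) ∧
    (∀ f g : SPHsub L, le1 f.1 g.1 → φ f = some true → φ g = some true) ∧
    (∀ a : L, pre0 φ ∩ WaS L a = ∅ → pre0 φ ⊆ VaS L a) ∧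
    (∀ a : L, pre1 φ ∩ VaS L a = ∅ → pre1 φ ⊆ WaS L a) :=
  stmt_13_general L φ hφ

end CanExt
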